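/- (Case 1 of the proof of Proposition 1(ii).) Suppose Assumption 1 holds, i.e. P₁ > min(P₂·a₁, P₂·a₂) and P₂ > min(P₁·a₁, P₁·a₂), and suppose in addition that strategy r₁ is a best response of hospital q₂ to strategy r₁ of hospital q₁, i.e. P₁·a₂ ≥ P₂. Then P₁·a₁ < P₂ and P₁ ≥ P₂·a₂, and the profile in which q₁ plays r₂ and q₂ plays r₁ is a Nash equilibrium of the 2×2 hospital game. -/

import Mathlib

/-- The two wards a hospital can choose to make excel. -/
inductive Ward : Type
  | r1 | r2
deriving DecidableEq

open Ward

/-- The size of the patient group associated with a ward. -/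
def grp (P1 P2 : ℝ) : Ward → ℝ
  | r1 => P1
  | r2 => P2

/-- Payoff of hospital q₁ when q₁ chooses `s1` and q₂ chooses `s2`:
if both choose the same ward, q₁ gets the fraction `a1` of that ward's group;
otherwise q₁ gets the full group of its chosen ward. -/
def pay1 (P1 P2 a1 : ℝ) (s1 s2 : Ward) : ℝ :=
  if s1 = s2 then grp P1 P2 s1 * a1 else grp P1 P2 s1

/-- Payoff of hospital q₂ when q₁ chooses `s1` and q₂ chooses `s2`:
if both choose the same ward, q₂ gets the fraction `a2` of that ward's group;
otherwise q₂ gets the full group of its chosen ward. -/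
def pay2 (P1 P2 a2 : ℝ) (s1 s2 : Ward) : ℝ :=
  if s1 = s2 then grp P1 P2 s2 * a2 else grp P1 P2 s2

/-- A strategy profile `(s1, s2)` is a Nash equilibrium if neither hospital can
strictly increase its payoff by unilaterally changing its strategy. -/
def IsNash (P1 P2 a1 a2 : ℝ) (s1 s2 : Ward) : Prop :=
  (∀ t1 : Ward, pay1 P1 P2 a1 t1 s2 ≤ pay1 P1 P2 a1 s1 s2) ∧
  (∀ t2 : Ward, pay2 P1 P2 a2 s1 t2 ≤ pay2 P1 P2 a2 s1 s2)

theorem Ward.forall {p : Ward → Prop} : (∀ w, p w) ↔ p r1 ∧ p r2 :=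
  ⟨fun h => ⟨h r1, h r2⟩, fun ⟨h1, h2⟩ w => by cases w <;> assumption⟩

theorem isNash_r2_r1_iff (P1 P2 a1 a2 : ℝ) :
    IsNash P1 P2 a1 a2 r2 r1 ↔ P1 * a1 ≤ P2 ∧ P2 * a2 ≤ P1 := by
  simp [IsNash, Ward.forall, pay1, pay2, grp]

theorem stmt5_general (P1 P2 a1 a2 : ℝ)
    (hP1 : 0 < P1) (hP2 : 0 < P2) (ha1 : 0 < a1)
    (hsum : a1 + a2 = 1)
    (hA2 : P2 > min (P1 * a1) (P1 * a2))
    (hbr : P1 * a2 ≥ P2) :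
    P1 * a1 < P2 ∧ P1 ≥ P2 * a2 ∧ IsNash P1 P2 a1 a2 r2 r1 := by
  have hlt : P1 * a1 < P2 := (min_lt_iff.1 hA2).resolve_right (not_lt.2 hbr)
  have ha2_le_one : a2 ≤ 1 := by linarith
  have hle : P2 * a2 ≤ P1 :=
    calc P2 * a2 ≤ P2 := mul_le_of_le_one_right hP2.le ha2_le_one
      _ ≤ P1 * a2 := hbr
      _ ≤ P1 := mul_le_of_le_one_right hP1.le ha2_le_one
  exact ⟨hlt, hle, (isNash_r2_r1_iff P1 P2 a1 a2).2 ⟨hlt.le, hle⟩⟩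

/-- Case 1 of the proof of Proposition 1(ii): under Assumption 1, if r₁ is a
best response of q₂ to r₁ of q₁ (i.e. P₁·a₂ ≥ P₂), then P₁·a₁ < P₂,
P₁ ≥ P₂·a₂, and the profile (r₂, r₁) is a Nash equilibrium. -/
theorem stmt5 (P1 P2 a1 a2 : ℝ)
    (hP1 : 0 < P1) (hP2 : 0 < P2) (ha1 : 0 < a1) (ha2 : 0 < a2)
    (hsum : a1 + a2 = 1)
    (hA1 : P1 > min (P2 * a1) (P2 * a2))
    (hA2 : P2 > min (P1 * a1) (P1 * a2))
    (hbr : P1 * a2 ≥ P2) :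
    P1 * a1 < P2 ∧ P1 ≥ P2 * a2 ∧ IsNash P1 P2 a1 a2 r2 r1 :=
  stmt5_general P1 P2 a1 a2 hP1 hP2 ha1 hsum hA2 hbr
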